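/- For each positive integer n, the sum over all binary trees T with n vertices of the product over all vertices v of T of (1 + 1/(2 h_v))^(h_v - 1) equals (2n+1)^(n-1) / n!. -/

import Mathlib

/-- A binary tree: `nil` is the empty tree, `node l r` is a vertex with
(possibly empty) left subtree `l` and right subtree `r`. -/
inductive BinTree where
  | nil : BinTree
  | node : BinTree → BinTree → BinTree

/-- Number of vertices of a binary tree. -/
def BinTree.size : BinTree → ℕ
  | .nil => 0
  | .node l r => l.size + r.size + 1

/-- The multiset of hook lengths of the vertices of a binary tree
(the hook length of a vertex is the number of vertices of the subtree
rooted at it, including itself). -/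
def BinTree.hooks : BinTree → Multiset ℕ
  | .nil => 0
  | .node l r => (BinTree.node l r).size ::ₘ (l.hooks + r.hooks)

/-!
Let `F n` be the sum over trees with `n` vertices. The root of a tree with `n + 1` vertices has
hook length `n + 1` and the other hooks are those of its two subtrees, so
`F (n + 1) = (1 + 1 / (2 (n + 1))) ^ n * ∑_{i + j = n} F i * F j`.
The values `(2 n + 1) ^ (n - 1) / n!` satisfy the same recurrence by Abel's identity
`∑_{i + j = n} C(n, i) (2 i + 1) ^ (i - 1) (2 j + 1) ^ (j - 1) = (2 n + 2) ^ n / (n + 1)`.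

Abel's identity is first proved in the asymmetric form
`∑_{i + j = n} C(n, i) (z i + 1) ^ (i - 1) (z j + y) ^ j = (z n + y + 1) ^ n`, by induction on `n`:
both sides have `y`-derivative `n` times the previous case at `y + z`, and both vanish at
`y = -(z n + 1)`, the left side because it is then an `n`-th finite difference of a polynomial of
degree `n - 1`. Adding the case `y = 1` to its mirror image gives the symmetric form.
-/

open Finset

theorem Polynomial.sum_antidiagonal_neg_one_pow_mul_choose_mul_eval {R : Type*} [CommRing R]
    {P : Polynomial R} {n : ℕ} (hP : P.natDegree < n) :
    ∑ ij ∈ antidiagonal n, (-1) ^ ij.2 * n.choose ij.1 * P.eval (ij.1 : R) = 0 := by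
  have h := congr_fun (Polynomial.fwdDiff_iter_eq_zero_of_degree_lt hP) 0
  rw [fwdDiff_iter_eq_sum_shift, ← Nat.sum_antidiagonal_eq_sum_range_succ
    (fun i j => ((-1 : ℤ) ^ j * (n.choose i : ℤ)) • P.eval (0 + i • (1 : R))), Pi.zero_apply] at h
  rw [← h]
  exact sum_congr rfl fun ij _ => by simp [zsmul_eq_mul]

-- At `i = 0` the truncated exponent makes `(z * 0 + 1) ^ (0 - 1) = 1`, the correct term.
noncomputable def abelSum (z y : ℝ) (n : ℕ) : ℝ :=
  ∑ ij ∈ antidiagonal n, n.choose ij.1 * (z * ij.1 + 1) ^ (ij.1 - 1) * (z * ij.2 + y) ^ ij.2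

lemma mul_add_one_mul_pow_pred (z : ℝ) (i : ℕ) :
    (z * i + 1) * (z * i + 1) ^ (i - 1) = (z * i + 1) ^ i := by
  rcases i with _ | i
  · simp
  · exact mul_pow_sub_one i.succ_ne_zero _

lemma hasDerivAt_abelSum (z y : ℝ) (n : ℕ) :
    HasDerivAt (fun y => abelSum z y (n + 1)) ((n + 1) * abelSum z (y + z) n) y := by
  have hterm : ∀ ij ∈ antidiagonal (n + 1), HasDerivAt
      (fun y => (n + 1).choose ij.1 * (z * ij.1 + 1) ^ (ij.1 - 1) * (z * ij.2 + y) ^ ij.2)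
      ((n + 1).choose ij.1 * (z * ij.1 + 1) ^ (ij.1 - 1) * (ij.2 * (z * ij.2 + y) ^ (ij.2 - 1)))
      y := fun ij _ => by
    simpa using (((hasDerivAt_id' y).const_add (z * ij.2)).pow ij.2).const_mul
      ((n + 1).choose ij.1 * (z * ij.1 + 1) ^ (ij.1 - 1))
  refine (HasDerivAt.fun_sum hterm).congr_deriv ?_
  rw [Nat.sum_antidiagonal_succ', abelSum, mul_sum]
  simp only [Nat.cast_zero, zero_mul, mul_zero, zero_add, Nat.add_sub_cancel]
  refine sum_congr rfl fun ij hij => ?_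
  have hchoose : ((n + 1).choose ij.1 : ℝ) * (ij.2 + 1) = (n + 1) * n.choose ij.1 := by
    have := Nat.choose_mul_succ_eq n ij.1
    rw [show n + 1 - ij.1 = ij.2 + 1 by have := mem_antidiagonal.mp hij; omega] at this
    exact_mod_cast this.symm.trans (mul_comm _ _)
  push_cast
  linear_combination (z * ij.1 + 1) ^ (ij.1 - 1) * (z * ij.2 + (y + z)) ^ ij.2 * hchoose

lemma abelSum_succ_neg (z : ℝ) (n : ℕ) : abelSum z (-(z * (n + 1) + 1)) (n + 1) = 0 := by
  have hP : ((Polynomial.C z * Polynomial.X + 1) ^ n).natDegree < n + 1 := by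
    refine (Polynomial.natDegree_pow_le_of_le (m := 1) n ?_).trans_lt (by omega)
    compute_degree!
  rw [← Polynomial.sum_antidiagonal_neg_one_pow_mul_choose_mul_eval hP, abelSum]
  refine sum_congr rfl fun ij hij => ?_
  obtain ⟨i, j⟩ := ij
  have hij : i + j = n + 1 := mem_antidiagonal.mp hij
  have hbase : z * j + -(z * (n + 1) + 1) = -(z * i + 1) := by
    rw [show (n : ℝ) + 1 = i + j by exact_mod_cast hij.symm]; ring
  have hpow : (z * i + 1) ^ (i - 1) * (z * i + 1) ^ j = (z * i + 1) ^ n := by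
    rcases i with _ | i
    · simp
    · rw [← pow_add]; congr 1; omega
  rw [hbase, neg_pow]
  simp only [Polynomial.eval_pow, Polynomial.eval_add, Polynomial.eval_one,
    Polynomial.eval_mul, Polynomial.eval_X, Polynomial.eval_C]
  linear_combination ((n + 1).choose i * (-1) ^ j : ℝ) * hpow

theorem abelSum_eq (z y : ℝ) (n : ℕ) : abelSum z y n = (z * n + y + 1) ^ n := by
  induction n generalizing y with
  | zero => simp [abelSum]
  | succ n ih =>
    set D : ℝ → ℝ := fun y => abelSum z y (n + 1) - (z * (n + 1 : ℕ) + y + 1) ^ (n + 1)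
    have hD : ∀ y, HasDerivAt D 0 y := fun y => by
      have hR := (((hasDerivAt_id' y).const_add (z * (n + 1 : ℕ))).add_const 1).fun_pow (n + 1)
      refine ((hasDerivAt_abelSum z y n).fun_sub hR).congr_deriv ?_
      rw [ih]; push_cast; ring
    have hconst := is_const_of_deriv_eq_zero (fun y => (hD y).differentiableAt)
      (fun y => (hD y).deriv) y (-(z * (n + 1) + 1))
    have hroot : (z * (n + 1 : ℕ) + -(z * (n + 1) + 1) + 1 : ℝ) = 0 := by push_cast; ring
    simp only [D, abelSum_succ_neg] at hconst
    rwa [hroot, zero_pow n.succ_ne_zero, sub_zero, sub_eq_zero] at hconst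

theorem mul_add_two_mul_sum_abel (z : ℝ) (n : ℕ) :
    (z * n + 2) * ∑ ij ∈ antidiagonal n,
        n.choose ij.1 * (z * ij.1 + 1) ^ (ij.1 - 1) * (z * ij.2 + 1) ^ (ij.2 - 1) =
      2 * (z * n + 2) ^ n := by
  have hright : ∑ ij ∈ antidiagonal n,
      n.choose ij.1 * (z * ij.1 + 1) ^ (ij.1 - 1) * (z * ij.2 + 1) ^ (ij.2 - 1) * (z * ij.2 + 1) =
        (z * n + 2) ^ n := by
    rw [show z * n + 2 = z * n + 1 + 1 by ring, ← abelSum_eq, abelSum]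
    refine sum_congr rfl fun ij _ => ?_
    rw [← mul_add_one_mul_pow_pred z ij.2]
    ring
  have hleft : ∑ ij ∈ antidiagonal n,
      n.choose ij.1 * (z * ij.1 + 1) ^ (ij.1 - 1) * (z * ij.2 + 1) ^ (ij.2 - 1) * (z * ij.1 + 1) =
        (z * n + 2) ^ n := by
    rw [← hright, ← Nat.sum_antidiagonal_swap]
    refine sum_congr rfl fun ij hij => ?_
    rw [Prod.fst_swap, Prod.snd_swap, Nat.choose_symm_of_eq_add (mem_antidiagonal.mp hij).symm]
    ring
  rw [two_mul]
  nth_rw 1 [← hleft]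
  rw [← hright, ← sum_add_distrib, mul_sum]
  refine sum_congr rfl fun ij hij => ?_
  rw [show (n : ℝ) = ij.1 + ij.2 by exact_mod_cast (mem_antidiagonal.mp hij).symm]
  ring

lemma sum_choose_mul_two_mul_add_one_pow_pred (n : ℕ) :
    ∑ ij ∈ antidiagonal n, n.choose ij.1 * (2 * ij.1 + 1 : ℝ) ^ (ij.1 - 1) *
        (2 * ij.2 + 1 : ℝ) ^ (ij.2 - 1) = (2 * n + 2 : ℝ) ^ n / (n + 1) := by
  rw [eq_div_iff (by positivity)]
  linear_combination mul_add_two_mul_sum_abel 2 n / 2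

namespace BinTree

def toBinaryTree : BinTree → BinaryTree Unit
  | nil => .nil
  | node l r => .node () l.toBinaryTree r.toBinaryTree

def ofBinaryTree : BinaryTree Unit → BinTree
  | .nil => nil
  | .node _ l r => node (ofBinaryTree l) (ofBinaryTree r)

def equivBinaryTree : BinTree ≃ BinaryTree Unit where
  toFun := toBinaryTree
  invFun := ofBinaryTree
  left_inv T := by induction T <;> simp_all [toBinaryTree, ofBinaryTree]
  right_inv x := by induction x <;> simp_all [toBinaryTree, ofBinaryTree]

@[simp]
lemma size_ofBinaryTree (x : BinaryTree Unit) : (ofBinaryTree x).size = x.numNodes := by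
  induction x <;> simp_all [ofBinaryTree, size]

lemma tsum_subtype_size_eq {R : Type*} [AddCommMonoid R] [TopologicalSpace R] (g : BinTree → R)
    (n : ℕ) : ∑' T : {T : BinTree // T.size = n}, g T =
      ∑ x ∈ BinaryTree.treesOfNumNodesEq n, g (ofBinaryTree x) := by
  rw [← Finset.tsum_subtype]
  exact (Equiv.tsum_eq (equivBinaryTree.symm.subtypeEquiv (by simp [equivBinaryTree])) _).symm

section HookProduct

variable {M : Type*} [CommMonoid M] (f : ℕ → M)

def hookProd (T : BinTree) : M := (T.hooks.map f).prod

@[simp]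
lemma hookProd_nil : hookProd f nil = 1 := by simp [hookProd, hooks]

@[simp]
lemma hookProd_node (l r : BinTree) :
    hookProd f (node l r) = f (l.size + r.size + 1) * (hookProd f l * hookProd f r) := by
  simp [hookProd, hooks, size]

end HookProduct

section HookSum

variable {R : Type*} [CommSemiring R] (f : ℕ → R)

def hookSum (n : ℕ) : R :=
  ∑ x ∈ BinaryTree.treesOfNumNodesEq n, hookProd f (ofBinaryTree x)

lemma hookSum_zero : hookSum f 0 = 1 := by simp [hookSum, ofBinaryTree]

lemma hookSum_succ (n : ℕ) :
    hookSum f (n + 1) = f (n + 1) * ∑ ij ∈ antidiagonal n, hookSum f ij.1 * hookSum f ij.2 := by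
  have hdisj : (antidiagonal n : Set (ℕ × ℕ)).PairwiseDisjoint fun ij =>
      BinaryTree.pairwiseNode (BinaryTree.treesOfNumNodesEq ij.1)
        (BinaryTree.treesOfNumNodesEq ij.2) := by
    simp_rw [Set.PairwiseDisjoint, Set.Pairwise, Function.onFun, disjoint_left]
    aesop
  rw [hookSum, BinaryTree.treesOfNumNodesEq_succ, sum_biUnion hdisj, mul_sum]
  refine sum_congr rfl fun ij hij => ?_
  rw [sum_map, sum_product, hookSum, hookSum, sum_mul_sum, mul_sum]
  refine sum_congr rfl fun l hl => ?_
  rw [mul_sum]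
  refine sum_congr rfl fun r hr => ?_
  rw [BinaryTree.mem_treesOfNumNodesEq] at hl hr
  change hookProd f (node (ofBinaryTree l) (ofBinaryTree r)) = _
  rw [hookProd_node, size_ofBinaryTree, size_ofBinaryTree, hl, hr, mem_antidiagonal.mp hij]

end HookSum

end BinTree

lemma one_add_one_div_two_mul_rpow_cast_sub_one (h : ℕ) :
    ((1 : ℝ) + 1 / (2 * h)) ^ ((h : ℝ) - 1) = (1 + 1 / (2 * h)) ^ (h - 1) := by
  rcases h with _ | h
  · simp
  · rw [Nat.cast_succ, add_sub_cancel_right, Real.rpow_natCast, Nat.add_sub_cancel]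

theorem BinTree.hookSum_half (n : ℕ) :
    hookSum (fun h : ℕ => ((1 : ℝ) + 1 / (2 * h)) ^ (h - 1)) n =
      (2 * (n : ℝ) + 1) ^ (n - 1) / n.factorial := by
  induction n using Nat.strong_induction_on with
  | _ n ih =>
    rcases n with _ | n
    · simp [hookSum_zero]
    have hconv : ∑ ij ∈ antidiagonal n,
        hookSum (fun h : ℕ => ((1 : ℝ) + 1 / (2 * h)) ^ (h - 1)) ij.1 *
          hookSum (fun h : ℕ => ((1 : ℝ) + 1 / (2 * h)) ^ (h - 1)) ij.2 =
        (2 * n + 2 : ℝ) ^ n / (n + 1) / n.factorial := by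
      rw [← sum_choose_mul_two_mul_add_one_pow_pred, sum_div]
      refine sum_congr rfl fun ij hij => ?_
      obtain ⟨i, j⟩ := ij
      obtain rfl : i + j = n := mem_antidiagonal.mp hij
      rw [ih i (by omega), ih j (by omega), Nat.cast_add_choose]
      field_simp
    have hweight : (1 : ℝ) + 1 / (2 * (n + 1 : ℕ)) = (2 * (n + 1 : ℕ) + 1) / (2 * n + 2) := by
      push_cast
      field_simp
    rw [hookSum_succ, hconv, hweight, div_pow, Nat.factorial_succ, Nat.add_sub_cancel]
    push_cast
    field_simp

theorem han_hook_length_half_general (n : ℕ) :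
    ∑' T : {T : BinTree // T.size = n},
      ((T.1.hooks).map (fun h => ((1 : ℝ) + 1 / (2 * h)) ^ (h - 1))).prod
      = (2 * (n : ℝ) + 1) ^ (n - 1) / (Nat.factorial n : ℝ) := by
  -- The hooks are cast to `ℝ` here, so `h - 1` is a real exponent.
  simp only [Multiset.bind_def, Multiset.pure_def, Multiset.bind_singleton, Multiset.map_map]
  have hweight : (fun x : ℝ => (1 + 1 / (2 * x)) ^ (x - 1)) ∘ Nat.cast =
      fun h : ℕ => ((1 : ℝ) + 1 / (2 * h)) ^ (h - 1) :=
    funext one_add_one_div_two_mul_rpow_cast_sub_one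
  rw [hweight]
  exact (BinTree.tsum_subtype_size_eq _ n).trans (BinTree.hookSum_half n)

/-- Han's Corollary 2: the specialization `z = 1/2` of Han's hook length
formula for binary trees. -/
theorem han_hook_length_half (n : ℕ) (hn : 1 ≤ n) :
    ∑' T : {T : BinTree // T.size = n},
      ((T.1.hooks).map (fun h => ((1 : ℝ) + 1 / (2 * h)) ^ (h - 1))).prod
      = (2 * (n : ℝ) + 1) ^ (n - 1) / (Nat.factorial n : ℝ) :=
  han_hook_length_half_general n
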